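/- arXiv:0907.0172 — 4 statements merged into one kernel-verified Lean document; each statement's English description precedes it below -/
import Mathlib

section
/- Let N be an even positive integer and v := exp(πi/N). Then for every integer l with 0 ≤ l ≤ N−1 one has ∑_{j=1, j odd}^{N−1} D₀(j,l) = 0, where D₀(j,l) := (v^j + v^{−j})·( ∏_{k=1}^l A(j,k) + 2{j}² · ∑_{k=1}^l ∏_{1≤k'≤l, k'≠k} A(j,k') ). (This is the identity which, via Habiro's cyclotomic expansion, proves that the Kashaev invariant ⟨K^{(0,2)}⟩_N of the disconnected (0,2)-cable of any knot K vanishes for every even N.) -/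
/-!
Since `v ^ N = -1`, replacing `j` by `N - j` leaves every bracket `{j ± k}` unchanged up to the
order of the two factors of `A(j, k)`, while it changes the sign of `v ^ j + v ^ (-j)`; hence
`D₀(N - j, l) = -D₀(j, l)`. For even `N` the reflection `j ↦ N - j` permutes the odd
`j ∈ [1, N - 1]`, so the sum equals its own negative.
-/

open Complex

/-- `v = exp(πi/N)`. -/
noncomputable def vN (N : ℕ) : ℂ := Complex.exp (Real.pi * Complex.I / N)

/-- `{n} = v^n - v^{-n}` at `v = exp(πi/N)`. -/
noncomputable def br (N : ℕ) (n : ℤ) : ℂ := vN N ^ n - vN N ^ (-n)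

/-- `A(j,k) = {j-k}{j+k}`. -/
noncomputable def AA (N : ℕ) (j k : ℤ) : ℂ := br N (j - k) * br N (j + k)

/-- `D_m(j,l)` from the context. -/
noncomputable def DD (N : ℕ) (m j : ℤ) (l : ℕ) : ℂ :=
  (vN N ^ j + vN N ^ (-j)) *
      ((∏ k ∈ Finset.Icc 1 l, AA N j (k : ℤ)) +
        2 * (br N j) ^ 2 *
          ∑ k ∈ Finset.Icc 1 l, ∏ k' ∈ (Finset.Icc 1 l).erase k, AA N j (k' : ℤ)) +
    ((m : ℂ) * (j : ℂ) / 2) * br N j * ∏ k ∈ Finset.Icc 1 l, AA N j (k : ℤ)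

theorem Finset.sum_eq_zero_of_involutive_of_apply_eq_neg {ι M : Type*} [AddCommGroup M]
    [IsAddTorsionFree M] {s : Finset ι} {f : ι → M} (g : ι → ι) (hg : ∀ i ∈ s, g i ∈ s)
    (hgg : ∀ i ∈ s, g (g i) = i) (hf : ∀ i ∈ s, f (g i) = -f i) : ∑ i ∈ s, f i = 0 := by
  have hsum : ∑ i ∈ s, f i = ∑ i ∈ s, f (g i) :=
    (Finset.sum_nbij' g g hg hg hgg hgg fun _ _ => rfl).symm
  rw [← self_eq_neg, ← Finset.sum_neg_distrib, hsum]
  exact Finset.sum_congr rfl hf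

lemma Nat.sub_mem_filter_odd_Icc {N j : ℕ} (hN : Even N)
    (hj : j ∈ (Finset.Icc 1 (N - 1)).filter (fun j => Odd j)) :
    N - j ∈ (Finset.Icc 1 (N - 1)).filter (fun j => Odd j) := by
  simp only [Finset.mem_filter, Finset.mem_Icc] at hj ⊢
  obtain ⟨⟨hj₁, hj₂⟩, hodd⟩ := hj
  exact ⟨⟨by omega, by omega⟩, Nat.Even.sub_odd (by omega) hN hodd⟩

lemma vN_ne_zero (N : ℕ) : vN N ≠ 0 := exp_ne_zero _

section Reflection

variable {N : ℕ}

lemma vN_pow_self (hN : N ≠ 0) : vN N ^ N = -1 := by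
  rw [vN, ← exp_nat_mul, mul_div_cancel₀ _ (Nat.cast_ne_zero.mpr hN), exp_pi_mul_I]

lemma vN_zpow_natCast_sub (hN : N ≠ 0) (m : ℤ) : vN N ^ ((N : ℤ) - m) = -vN N ^ (-m) := by
  rw [sub_eq_add_neg, zpow_add₀ (vN_ne_zero N), zpow_natCast, vN_pow_self hN, neg_one_mul]

lemma vN_zpow_neg_natCast_sub (hN : N ≠ 0) (m : ℤ) : vN N ^ (-((N : ℤ) - m)) = -vN N ^ m := by
  rw [zpow_neg, vN_zpow_natCast_sub hN, inv_neg, zpow_neg, inv_inv]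

lemma br_natCast_sub (hN : N ≠ 0) (m : ℤ) : br N ((N : ℤ) - m) = br N m := by
  rw [br, br, vN_zpow_natCast_sub hN, vN_zpow_neg_natCast_sub hN, neg_sub_neg]

lemma AA_natCast_sub (hN : N ≠ 0) (j k : ℤ) : AA N ((N : ℤ) - j) k = AA N j k := by
  rw [AA, AA, show (N : ℤ) - j - k = N - (j + k) by ring,
    show (N : ℤ) - j + k = N - (j - k) by ring, br_natCast_sub hN, br_natCast_sub hN, mul_comm]

lemma DD_zero_natCast_sub (hN : N ≠ 0) (j : ℤ) (l : ℕ) :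
    DD N 0 ((N : ℤ) - j) l = -DD N 0 j l := by
  simp only [DD, AA_natCast_sub hN, br_natCast_sub hN, vN_zpow_natCast_sub hN,
    vN_zpow_neg_natCast_sub hN, Int.cast_zero, zero_mul, zero_div, add_zero]
  ring

end Reflection

theorem sum_D_zero_eq_zero_of_even_general (N : ℕ) (hN : 0 < N) (hNeven : Even N)
    (l : ℕ) :
    ∑ j ∈ (Finset.Icc 1 (N - 1)).filter (fun j => Odd j), DD N 0 (j : ℤ) l = 0 := by
  have hle : ∀ j ∈ (Finset.Icc 1 (N - 1)).filter (fun j => Odd j), j ≤ N := fun j hj => by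
    simp only [Finset.mem_filter, Finset.mem_Icc] at hj
    omega
  refine Finset.sum_eq_zero_of_involutive_of_apply_eq_neg (N - ·)
    (fun j hj => Nat.sub_mem_filter_odd_Icc hNeven hj) (fun j hj => Nat.sub_sub_self (hle j hj))
    fun j hj => ?_
  rw [Nat.cast_sub (hle j hj), DD_zero_natCast_sub hN.ne']

/-- For every even positive `N` and every `0 ≤ l ≤ N-1`, the sum of `D₀(j,l)` over
odd `j` with `1 ≤ j ≤ N-1` vanishes. -/
theorem sum_D_zero_eq_zero_of_even (N : ℕ) (hN : 0 < N) (hNeven : Even N)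
    (l : ℕ) (hl : l ≤ N - 1) :
    ∑ j ∈ (Finset.Icc 1 (N - 1)).filter (fun j => Odd j), DD N 0 (j : ℤ) l = 0 :=
  sum_D_zero_eq_zero_of_even_general N hN hNeven l
end

section
/- In the ring ℤ[v^{±1}] of Laurent polynomials over ℤ in one variable v, define {n} := v^n − v^{−n}, [n] := {n}/{1} (a Laurent polynomial), and A(j,k) := {j−k}{j+k}. Then for all integers j, k and every positive integer N, the element A(N−j,k) − A(N+j,k) − 2·[2j]·{N}·{N−1} is divisible by {N}² in ℤ[v^{±1}]. -/
/-!
The difference `A(N-j,k) - A(N+j,k) = -{2j}{2N}` does not depend on `k`. Writing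
`{2j} = [2j]{1}` and `{2N} = {N}(v^N + v^{-N})`, and using
`{1}(v^N + v^{-N}) + 2{N-1} = (v + v^{-1}){N}`, the whole expression equals
`-(v + v^{-1})[2j]{N}²`.
-/

open LaurentPolynomial

/-- `{n} = v^n - v^{-n}` in `ℤ[v^{±1}]`. -/
noncomputable def brL (n : ℤ) : LaurentPolynomial ℤ := T n - T (-n)

/-- `A(j,k) = {j-k}{j+k}` in `ℤ[v^{±1}]`. -/
noncomputable def AL (j k : ℤ) : LaurentPolynomial ℤ := brL (j - k) * brL (j + k)

/-- The quantum integer `[n] = {n}/{1} = v^{n-1} + v^{n-3} + ⋯ + v^{1-n}` in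
`ℤ[v^{±1}]`, extended to negative `n` by `[-n] = -[n]`. -/
noncomputable def qL (n : ℤ) : LaurentPolynomial ℤ :=
  if 0 ≤ n then ∑ k ∈ Finset.range n.toNat, T (n - 1 - 2 * k)
  else - ∑ k ∈ Finset.range (-n).toNat, T (-n - 1 - 2 * k)

lemma sum_range_T_mul_brL_one (c : ℤ) (m : ℕ) :
    (∑ k ∈ Finset.range m, T (c - 2 * k)) * brL 1 = T (c + 1) - T (c + 1 - 2 * m) := by
  induction m with
  | zero => simp
  | succ m ih =>
    rw [Finset.sum_range_succ, add_mul, ih, brL, mul_sub, ← T_add, ← T_add]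
    push_cast
    ring_nf

lemma qL_mul_brL_one (n : ℤ) : qL n * brL 1 = brL n := by
  rcases le_or_gt 0 n with hn | hn
  · rw [qL, if_pos hn, sum_range_T_mul_brL_one, Int.toNat_of_nonneg hn, brL]
    ring_nf
  · rw [qL, if_neg (not_le.mpr hn), neg_mul, sum_range_T_mul_brL_one,
      Int.toNat_of_nonneg (by omega), brL]
    ring_nf

lemma AL_sub_sub_AL_add (n j k : ℤ) :
    AL (n - j) k - AL (n + j) k = -(brL (2 * j) * brL (2 * n)) := by
  simp only [AL, brL, sub_mul, mul_sub, ← T_add]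
  ring_nf

lemma brL_two_mul (n : ℤ) : brL (2 * n) = brL n * (T n + T (-n)) := by
  simp only [brL, sub_mul, mul_add, ← T_add]
  ring_nf

lemma brL_one_mul_add_two_mul_brL_sub_one (n : ℤ) :
    brL 1 * (T n + T (-n)) + 2 * brL (n - 1) = (T 1 + T (-1)) * brL n := by
  simp only [brL, sub_mul, mul_add, add_mul, mul_sub, ← T_add]
  ring_nf

lemma AL_sub_sub_AL_add_sub_eq (n j k : ℤ) :
    AL (n - j) k - AL (n + j) k - 2 * qL (2 * j) * brL n * brL (n - 1)
      = -(qL (2 * j) * (T 1 + T (-1))) * brL n ^ 2 := by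
  rw [AL_sub_sub_AL_add, ← qL_mul_brL_one (2 * j), brL_two_mul]
  linear_combination (-(qL (2 * j) * brL n)) * brL_one_mul_add_two_mul_brL_sub_one n

theorem brL_sq_dvd_general (j k : ℤ) (N : ℕ) :
    brL N ^ 2 ∣ AL ((N : ℤ) - j) k - AL ((N : ℤ) + j) k
      - 2 * qL (2 * j) * brL N * brL ((N : ℤ) - 1) := by
  rw [AL_sub_sub_AL_add_sub_eq]
  exact dvd_mul_left _ _

/-- `A(N-j,k) - A(N+j,k) - 2[2j]{N}{N-1}` is divisible by `{N}²` in `ℤ[v^{±1}]`. -/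
theorem brL_sq_dvd (j k : ℤ) (N : ℕ) (hN : 0 < N) :
    brL N ^ 2 ∣ AL ((N : ℤ) - j) k - AL ((N : ℤ) + j) k
      - 2 * qL (2 * j) * brL N * brL ((N : ℤ) - 1) :=
  brL_sq_dvd_general j k N
end

section
/- Let m, j be integers and N a positive integer. In the Laurent polynomial ring ℚ(i)[w^{±1}] over the field ℚ(i) (i the imaginary unit), set v := w⁴, {N} := v^N − v^{−N}, t_j := i^{N−1−j}·w^{(N+j)²} and t_{−j} := i^{N−1+j}·w^{(N−j)²} (these are units, so their m-th powers are defined for all integers m). Then there exists Q ∈ ℚ(i)[w^{±1}] such that t_{−j}^m = t_j^m + (mj/2)·t_j^m·{N} + t_j^m·(v^N + 1)²·Q. -/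
/-!
Comparing exponents gives `t_{-j}^m = t_j^m · (-x)^{-mj}` with `x = v^N`, since
`(N - j)² - (N + j)² = -4Nj` and `i^{2mj} = (-1)^{mj}`. For any unit `y` of a commutative ring,
`(y - 1)²` divides `y^k - 1 - k(y - 1)` (induction on `k`). Taking `y = -x` and using
`k(x + 1) - (k/2)(x - x⁻¹) = (k/2) x⁻¹ (x + 1)²` yields the congruence
`(-x)^{-k} ≡ 1 + (k/2)(x - x⁻¹) mod (x + 1)²`.
-/

open LaurentPolynomial IntermediateField

/-- The imaginary unit `i` as an element of the field `ℚ(i)`, realized as the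
intermediate field `ℚ⟮i⟯` of `ℂ`. -/
noncomputable def ii : ℚ⟮Complex.I⟯ := AdjoinSimple.gen ℚ Complex.I

/-- The `m`-th power `t_j^m` of the unit `t_j = i^{N-1-j} w^{(N+j)²}` of the Laurent
polynomial ring `ℚ(i)[w^{±1}]` (for a unit `u·w^b` with `u` a nonzero scalar one has
`(u·w^b)^m = u^m·w^{mb}` for every integer `m`). -/
noncomputable def tpow (m N j : ℤ) : LaurentPolynomial ℚ⟮Complex.I⟯ :=
  C (ii ^ (m * (N - 1 - j))) * T (m * (N + j) ^ 2)

theorem sub_one_sq_dvd_zpow_sub_one_sub_mul {R : Type*} [CommRing R] (y : Rˣ) (k : ℤ) :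
    ((y : R) - 1) ^ 2 ∣ ((y ^ k : Rˣ) : R) - 1 - k * (y - 1) := by
  induction k using Int.induction_on with
  | zero => simp
  | succ k ih =>
    obtain ⟨q, hq⟩ := ih
    refine ⟨y * q + k, ?_⟩
    rw [zpow_add_one, Units.val_mul]
    push_cast at hq ⊢
    linear_combination (y : R) * hq
  | pred k ih =>
    obtain ⟨q, hq⟩ := ih
    refine ⟨↑y⁻¹ * (q + k + 1), ?_⟩
    rw [zpow_sub_one, Units.val_mul]
    push_cast at hq ⊢
    linear_combination (↑y⁻¹ : R) * hq + ((k + 2) - (k + 1) * (y : R)) * y.mul_inv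

theorem add_one_sq_dvd_neg_zpow_neg_sub {R : Type*} [CommRing R] [Algebra ℚ R] (x : Rˣ) (k : ℤ) :
    ((x : R) + 1) ^ 2 ∣
      (((-x) ^ (-k) : Rˣ) : R) - 1 - algebraMap ℚ R ((k : ℚ) / 2) * (x - ↑x⁻¹) := by
  obtain ⟨q, hq⟩ := sub_one_sq_dvd_zpow_sub_one_sub_mul (-x) (-k)
  set h := algebraMap ℚ R ((k : ℚ) / 2)
  have two_mul_h : 2 * h = k := by
    rw [← map_ofNat (algebraMap ℚ R) 2, ← map_mul, mul_div_cancel₀ _ two_ne_zero, map_intCast]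
  refine ⟨q + h * ↑x⁻¹, ?_⟩
  rw [Units.val_neg] at hq
  push_cast at hq
  linear_combination hq + ((x : R) + 1) * two_mul_h.symm - h * ((x : R) + 2) * x.mul_inv

theorem val_neg_unitOfInvertible_T_zpow {K : Type*} [Field K] (n k : ℤ) :
    (((-unitOfInvertible (T n : K[T;T⁻¹])) ^ k : K[T;T⁻¹]ˣ) : K[T;T⁻¹]) =
      C ((-1) ^ k) * T (n * k) := by
  induction k using Int.induction_on with
  | zero => simp
  | succ k ih =>
    rw [zpow_add_one, Units.val_mul, ih, zpow_add_one₀ (neg_ne_zero.mpr one_ne_zero), mul_add,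
      mul_one, T_add, Units.val_neg, val_unitOfInvertible, map_mul, map_neg, map_one]
    ring
  | pred k ih =>
    rw [zpow_sub_one, Units.val_mul, ih, zpow_sub_one₀ (neg_ne_zero.mpr one_ne_zero), mul_sub,
      mul_one, T_sub, inv_neg, Units.val_neg, val_inv_unitOfInvertible, invOf_T, inv_neg_one,
      map_mul, map_neg, map_one]
    ring

theorem ii_sq : ii ^ 2 = -1 :=
  Subtype.ext (by simp [ii])

theorem ii_ne_zero : ii ≠ 0 := by
  rintro h
  simpa [h] using ii_sq

theorem tpow_neg_right (m N j : ℤ) :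
    tpow m N (-j) =
      tpow m N j * ↑((-unitOfInvertible (T (4 * N) : ℚ⟮Complex.I⟯[T;T⁻¹])) ^ (-(m * j))) := by
  rw [val_neg_unitOfInvertible_T_zpow, tpow, tpow, mul_mul_mul_comm, ← map_mul, ← T_add, zpow_neg,
    ← inv_zpow, inv_neg_one, ← ii_sq, ← zpow_natCast, ← zpow_mul, ← zpow_add₀ ii_ne_zero]
  ring_nf

theorem tpow_neg_eq_general (m j : ℤ) (N : ℕ) :
    ∃ Q : LaurentPolynomial ℚ⟮Complex.I⟯,
      tpow m N (-j) =
        tpow m N j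
          + C ((((m * j : ℤ) : ℚ) / 2 : ℚ) : ℚ⟮Complex.I⟯) * tpow m N j
              * (T (4 * (N : ℤ)) - T (-(4 * (N : ℤ))))
          + tpow m N j * (T (4 * (N : ℤ)) + 1) ^ 2 * Q := by
  obtain ⟨Q, hQ⟩ :=
    add_one_sq_dvd_neg_zpow_neg_sub (unitOfInvertible (T (4 * N) : ℚ⟮Complex.I⟯[T;T⁻¹])) (m * j)
  refine ⟨Q, ?_⟩
  rw [val_unitOfInvertible, val_inv_unitOfInvertible, invOf_T, LaurentPolynomial.algebraMap_apply,
    eq_ratCast] at hQ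
  rw [tpow_neg_right]
  linear_combination tpow m N j * hQ

/-- With `v = w⁴` and `{N} = v^N - v^{-N}` in `ℚ(i)[w^{±1}]`, there is
`Q ∈ ℚ(i)[w^{±1}]` with `t_{-j}^m = t_j^m + (mj/2) t_j^m {N} + t_j^m (v^N+1)² Q`. -/
theorem tpow_neg_eq (m j : ℤ) (N : ℕ) (hN : 0 < N) :
    ∃ Q : LaurentPolynomial ℚ⟮Complex.I⟯,
      tpow m N (-j) =
        tpow m N j
          + C ((((m * j : ℤ) : ℚ) / 2 : ℚ) : ℚ⟮Complex.I⟯) * tpow m N j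
              * (T (4 * (N : ℤ)) - T (-(4 * (N : ℤ))))
          + tpow m N j * (T (4 * (N : ℤ)) + 1) ^ 2 * Q :=
  tpow_neg_eq_general m j N
end

section
/- Let N be a positive integer, m an integer, and j, l integers with 1 ≤ j ≤ N−1 and 0 ≤ l ≤ N−1. Set ω := exp(πi/(4N)). For a nonzero complex variable w let v(w) := w⁴, {n}(w) := v(w)^n − v(w)^{−n}, [n](w) := {n}(w)/{1}(w), A(n,k)(w) := {n−k}(w)·{n+k}(w), t_j(w) := i^{N−1−j}·w^{(N+j)²} and t_{−j}(w) := i^{N−1+j}·w^{(N−j)²}. Then lim_{w→ω} ( t_j(w)^m·[N+j](w)·∏_{k=1}^l A(N+j,k)(w) + t_{−j}(w)^m·[N−j](w)·∏_{k=1}^l A(N−j,k)(w) ) / [N](w) = t_j(ω)^m · D_m(j,l), where D_m(j,l) is evaluated at v = exp(πi/N). (Note [N](ω) = 0, so the left-hand side is a genuine limit of a quotient of analytic functions.) -/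
/-! Both `[n](w)` carry the factor `1/{1}(w)`, and `{1}(w)` vanishes only where `w = 0` or
`w⁸ = 1`, so near `ω` the quotient equals `numw / {N}`, the same quotient written with `{·}` in
place of `[·]`. Since `v(ω)^N = -1`, we have `{N + n}(ω) = -{n}(ω)`, `{N - n}(ω) = {n}(ω)`,
`A(N ± j, k)(ω) = A(j, k)(ω)` and `t_{-j}(ω) = t_j(ω)`; hence `numw` and `{N}` both vanish at `ω`
and the limit is the quotient of their derivatives. With `cw n = v^n + v^{-n}` one has
`{n}' = (4n/w)·cw n`, so `{N}'(ω) = -8N/ω`, and in `numw'(ω)` the two summands combine, by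
`cw a·{b} + {a}·cw b = 2{a + b}`, into `-(8N/ω)·t_j(ω)^m·D_m(j,l)`. -/

open Complex

/-- `v(w) = w⁴`. -/
noncomputable def vw (w : ℂ) : ℂ := w ^ (4 : ℕ)

/-- `{n}(w) = v(w)^n - v(w)^{-n}`. -/
noncomputable def brw (n : ℤ) (w : ℂ) : ℂ := vw w ^ n - vw w ^ (-n)

/-- `[n](w) = {n}(w)/{1}(w)`. -/
noncomputable def qw (n : ℤ) (w : ℂ) : ℂ := brw n w / brw 1 w

/-- `A(n,k)(w) = {n-k}(w)·{n+k}(w)`. -/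
noncomputable def Aw (n k : ℤ) (w : ℂ) : ℂ := brw (n - k) w * brw (n + k) w

/-- `t_j(w) = i^{N-1-j} w^{(N+j)²}` (for `j` and `-j`, use `tw N j` and `tw N (-j)`). -/
noncomputable def tw (N : ℕ) (j : ℤ) (w : ℂ) : ℂ :=
  Complex.I ^ ((N : ℤ) - 1 - j) * w ^ (((N : ℤ) + j) ^ 2)

open Filter
open scoped Topology

section Calculus

variable {𝕜 : Type*} [NontriviallyNormedField 𝕜]

theorem tendsto_div_nhdsNE_of_hasDerivAt {f g : 𝕜 → 𝕜} {x f' g' : 𝕜} (hf : HasDerivAt f f' x)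
    (hg : HasDerivAt g g' x) (hf0 : f x = 0) (hg0 : g x = 0) (hg' : g' ≠ 0) :
    Tendsto (fun w => f w / g w) (𝓝[≠] x) (𝓝 (f' / g')) := by
  refine ((hasDerivAt_iff_tendsto_slope.1 hf).div (hasDerivAt_iff_tendsto_slope.1 hg) hg').congr' ?_
  filter_upwards [self_mem_nhdsWithin] with w hw
  rw [Pi.div_apply, slope_def_field, slope_def_field, hf0, hg0, sub_zero, sub_zero,
    div_div_div_cancel_right₀ (sub_ne_zero.2 hw)]

theorem hasDerivAt_zpow_sub_zpow_neg (n : ℤ) {w : 𝕜} (hw : w ≠ 0) :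
    HasDerivAt (fun w => w ^ n - w ^ (-n)) (n / w * (w ^ n + w ^ (-n))) w := by
  refine ((hasDerivAt_zpow n w (.inl hw)).sub (hasDerivAt_zpow (-n) w (.inl hw))).congr_deriv ?_
  rw [zpow_sub_one₀ hw, zpow_sub_one₀ hw]
  push_cast
  ring

theorem hasDerivAt_mul_zpow_zpow (c : 𝕜) (s m : ℤ) {w : 𝕜} (hw : w ≠ 0) :
    HasDerivAt (fun w => (c * w ^ s) ^ m) (m * s / w * (c * w ^ s) ^ m) w := by
  simp_rw [mul_zpow, ← zpow_mul]
  refine ((hasDerivAt_zpow (s * m) w (.inl hw)).const_mul (c ^ m)).congr_deriv ?_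
  rw [zpow_sub_one₀ hw]
  push_cast
  ring

end Calculus

noncomputable def cw (n : ℤ) (w : ℂ) : ℂ := vw w ^ n + vw w ^ (-n)

noncomputable def derivAw (n k : ℤ) (w : ℂ) : ℂ :=
  4 * ((n - k : ℤ) : ℂ) / w * cw (n - k) w * brw (n + k) w +
    brw (n - k) w * (4 * ((n + k : ℤ) : ℂ) / w * cw (n + k) w)

theorem vw_zpow (w : ℂ) (n : ℤ) : vw w ^ n = w ^ (4 * n) := by
  rw [vw, ← zpow_natCast, ← zpow_mul]
  norm_num

theorem hasDerivAt_brw (n : ℤ) {w : ℂ} (hw : w ≠ 0) :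
    HasDerivAt (brw n) (4 * n / w * cw n w) w := by
  have h := hasDerivAt_zpow_sub_zpow_neg (4 * n) hw
  simp only [← mul_neg, ← vw_zpow] at h
  refine h.congr_deriv ?_
  rw [cw, vw_zpow, vw_zpow]
  push_cast
  ring

theorem hasDerivAt_Aw (n k : ℤ) {w : ℂ} (hw : w ≠ 0) :
    HasDerivAt (Aw n k) (derivAw n k w) w :=
  (hasDerivAt_brw (n - k) hw).mul (hasDerivAt_brw (n + k) hw)

theorem hasDerivAt_tw_zpow (N : ℕ) (j m : ℤ) {w : ℂ} (hw : w ≠ 0) :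
    HasDerivAt (fun w => tw N j w ^ m) (m * ((N : ℂ) + j) ^ 2 / w * tw N j w ^ m) w := by
  refine (hasDerivAt_mul_zpow_zpow (Complex.I ^ ((N : ℤ) - 1 - j)) (((N : ℤ) + j) ^ 2) m
    hw).congr_deriv ?_
  push_cast
  rfl

theorem eventually_brw_one_ne_zero (z : ℂ) : ∀ᶠ w in 𝓝[≠] z, brw 1 w ≠ 0 := by
  have hfin : {w : ℂ | brw 1 w = 0}.Finite := by
    refine ((Polynomial.nthRoots 8 (1 : ℂ)).toFinset.finite_toSet.insert 0).subset fun w hw => ?_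
    rcases eq_or_ne w 0 with h0 | h0
    · exact .inl h0
    refine .inr ?_
    have hv : vw w ≠ 0 := pow_ne_zero 4 h0
    simp only [Set.mem_ofPred_eq, brw, zpow_one, zpow_neg_one, sub_eq_zero] at hw
    simp only [Finset.mem_coe, Multiset.mem_toFinset, Polynomial.mem_nthRoots (by norm_num : 0 < 8)]
    calc w ^ 8 = vw w * vw w := by rw [vw]; ring
      _ = vw w * (vw w)⁻¹ := by rw [← hw]
      _ = 1 := mul_inv_cancel₀ hv
  filter_upwards [nhdsNE_of_nhdsNE_sdiff_finite univ_mem hfin] with w hw using hw.2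

theorem cw_mul_brw_add_brw_mul_cw {w : ℂ} (hw : w ≠ 0) (a b : ℤ) :
    cw a w * brw b w + brw a w * cw b w = 2 * brw (a + b) w := by
  have hv : vw w ≠ 0 := pow_ne_zero 4 hw
  rw [cw, cw, brw, brw, brw, neg_add, zpow_add₀ hv, zpow_add₀ hv]
  ring

section Antiperiodic

variable {ω : ℂ} {N : ℤ}

theorem brw_add_eq_neg (hω : ω ≠ 0) (h : vw ω ^ N = -1) (n : ℤ) :
    brw (N + n) ω = -brw n ω := by
  have hv : vw ω ≠ 0 := pow_ne_zero 4 hω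
  rw [brw, brw, neg_add, zpow_add₀ hv, zpow_add₀ hv, zpow_neg, h]
  ring

theorem brw_sub_eq (hω : ω ≠ 0) (h : vw ω ^ N = -1) (n : ℤ) : brw (N - n) ω = brw n ω := by
  rw [sub_eq_add_neg, brw_add_eq_neg hω h, brw, brw, neg_neg]
  ring

theorem cw_add_eq_neg (hω : ω ≠ 0) (h : vw ω ^ N = -1) (n : ℤ) : cw (N + n) ω = -cw n ω := by
  have hv : vw ω ≠ 0 := pow_ne_zero 4 hω
  rw [cw, cw, neg_add, zpow_add₀ hv, zpow_add₀ hv, zpow_neg, h]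
  ring

theorem cw_sub_eq_neg (hω : ω ≠ 0) (h : vw ω ^ N = -1) (n : ℤ) : cw (N - n) ω = -cw n ω := by
  rw [sub_eq_add_neg, cw_add_eq_neg hω h, cw, cw, neg_neg]
  ring

theorem brw_eq_zero (hω : ω ≠ 0) (h : vw ω ^ N = -1) : brw N ω = 0 := by
  simpa [brw] using brw_add_eq_neg hω h 0

theorem cw_eq_neg_two (hω : ω ≠ 0) (h : vw ω ^ N = -1) : cw N ω = -2 := by
  rw [← add_zero N, cw_add_eq_neg hω h, cw, neg_zero, zpow_zero]
  norm_num

theorem Aw_add_eq (hω : ω ≠ 0) (h : vw ω ^ N = -1) (j k : ℤ) : Aw (N + j) k ω = Aw j k ω := by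
  rw [Aw, Aw, add_sub_assoc, add_assoc, brw_add_eq_neg hω h, brw_add_eq_neg hω h]
  ring

theorem Aw_sub_eq (hω : ω ≠ 0) (h : vw ω ^ N = -1) (j k : ℤ) : Aw (N - j) k ω = Aw j k ω := by
  rw [Aw, Aw, sub_sub, sub_add, brw_sub_eq hω h, brw_sub_eq hω h, mul_comm]

theorem brw_mul_derivAw_sub_sub (hω : ω ≠ 0) (h : vw ω ^ N = -1) (j k : ℤ) :
    brw j ω * (derivAw (N - j) k ω - derivAw (N + j) k ω) =
      -(16 * N / ω) * brw j ω ^ 2 * cw j ω := by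
  have h₁ := cw_mul_brw_add_brw_mul_cw hω (j + k) (j - k)
  have h₂ := cw_mul_brw_add_brw_mul_cw hω j j
  rw [show j + k + (j - k) = j + j by ring] at h₁
  rw [derivAw, derivAw, show N - j - k = N - (j + k) by ring, show N - j + k = N - (j - k) by ring,
    show N + j - k = N + (j - k) by ring, add_assoc]
  simp only [brw_add_eq_neg hω h, brw_sub_eq hω h, cw_add_eq_neg hω h, cw_sub_eq_neg hω h]
  push_cast
  linear_combination (-(8 * N / ω) * brw j ω) * h₁ + (8 * N / ω * brw j ω) * h₂

end Antiperiodic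

theorem tw_neg_eq {ω : ℂ} {N : ℕ} (hω : ω ≠ 0) (h : vw ω ^ (N : ℤ) = -1) (j : ℤ) :
    tw N (-j) ω = tw N j ω := by
  have hI : (Complex.I ^ (2 : ℤ)) ^ j * (vw ω ^ (N : ℤ)) ^ (-j) = 1 := by
    rw [h, zpow_ofNat, Complex.I_sq, zpow_neg, mul_inv_cancel₀ (zpow_ne_zero _ (by norm_num))]
  rw [vw_zpow, ← zpow_mul, ← zpow_mul] at hI
  rw [tw, tw, show (N : ℤ) - 1 - -j = (N - 1 - j) + 2 * j by ring,
    show ((N : ℤ) + -j) ^ 2 = (N + j) ^ 2 + 4 * N * -j by ring, zpow_add₀ Complex.I_ne_zero,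
    zpow_add₀ hω]
  linear_combination Complex.I ^ ((N : ℤ) - 1 - j) * ω ^ (((N : ℤ) + j) ^ 2) * hI

noncomputable def numw (N : ℕ) (m j : ℤ) (l : ℕ) (w : ℂ) : ℂ :=
  tw N j w ^ m * brw (N + j) w * ∏ k ∈ Finset.Icc 1 l, Aw (N + j) k w +
    tw N (-j) w ^ m * brw (N - j) w * ∏ k ∈ Finset.Icc 1 l, Aw (N - j) k w

noncomputable def Dw (m j : ℤ) (l : ℕ) (w : ℂ) : ℂ :=
  cw j w * ((∏ k ∈ Finset.Icc 1 l, Aw j k w) +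
      2 * brw j w ^ 2 * ∑ k ∈ Finset.Icc 1 l, ∏ k' ∈ (Finset.Icc 1 l).erase k, Aw j k' w) +
    (m * j / 2) * brw j w * ∏ k ∈ Finset.Icc 1 l, Aw j k w

theorem DD_eq_Dw {N : ℕ} {ω : ℂ} (hv : vw ω = vN N) (m j : ℤ) (l : ℕ) :
    DD N m j l = Dw m j l ω := by
  simp only [DD, Dw, AA, br, Aw, brw, cw, hv]

section Numerator

variable {N : ℕ} {ω : ℂ}

theorem numw_eq_zero (hω : ω ≠ 0) (h : vw ω ^ (N : ℤ) = -1) (m j : ℤ) (l : ℕ) :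
    numw N m j l ω = 0 := by
  simp only [numw, tw_neg_eq hω h, brw_add_eq_neg hω h, brw_sub_eq hω h, Aw_add_eq hω h,
    Aw_sub_eq hω h]
  ring

theorem hasDerivAt_numw (hω : ω ≠ 0) (h : vw ω ^ (N : ℤ) = -1) (m j : ℤ) (l : ℕ) :
    HasDerivAt (numw N m j l) (-(8 * N / ω) * (tw N j ω ^ m * Dw m j l ω)) ω := by
  have hprod (n : ℤ) := HasDerivAt.fun_finsetProd (u := Finset.Icc 1 l) fun k _ =>
    hasDerivAt_Aw n k hω
  refine ((((hasDerivAt_tw_zpow N j m hω).fun_mul (hasDerivAt_brw (N + j) hω)).fun_mul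
    (hprod _)).fun_add (((hasDerivAt_tw_zpow N (-j) m hω).fun_mul
      (hasDerivAt_brw (N - j) hω)).fun_mul (hprod _))).congr_deriv ?_
  simp only [smul_eq_mul, tw_neg_eq hω h, brw_add_eq_neg hω h, brw_sub_eq hω h,
    cw_add_eq_neg hω h, cw_sub_eq_neg hω h, Aw_add_eq hω h, Aw_sub_eq hω h, Dw]
  set Q : ℕ → ℂ := fun k => ∏ k' ∈ (Finset.Icc 1 l).erase k, Aw j k' ω
  have hsum : brw j ω * (∑ k ∈ Finset.Icc 1 l, Q k * derivAw (N - j) k ω -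
      ∑ k ∈ Finset.Icc 1 l, Q k * derivAw (N + j) k ω) =
      -(16 * N / ω) * brw j ω ^ 2 * cw j ω * ∑ k ∈ Finset.Icc 1 l, Q k := by
    rw [← Finset.sum_sub_distrib, Finset.mul_sum, Finset.mul_sum]
    refine Finset.sum_congr rfl fun k _ => ?_
    linear_combination Q k * brw_mul_derivAw_sub_sub hω h j k
  push_cast
  linear_combination tw N j ω ^ m * hsum

end Numerator

theorem numw_div_brw_eventuallyEq (z : ℂ) (N : ℕ) (m j : ℤ) (l : ℕ) :
    (fun w => numw N m j l w / brw N w) =ᶠ[𝓝[≠] z] fun w =>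
      (tw N j w ^ m * qw (N + j) w * (∏ k ∈ Finset.Icc 1 l, Aw (N + j) k w) +
        tw N (-j) w ^ m * qw (N - j) w * ∏ k ∈ Finset.Icc 1 l, Aw (N - j) k w) / qw N w := by
  filter_upwards [eventually_brw_one_ne_zero z] with w hw
  simp only [numw, qw]
  field_simp

theorem vw_exp_pi_mul_I_div (N : ℕ) : vw (Complex.exp (Real.pi * Complex.I / (4 * N))) = vN N := by
  rw [vw, ← Complex.exp_nat_mul, vN]
  push_cast
  ring_nf

theorem vN_zpow_self {N : ℕ} (hN : 0 < N) : vN N ^ (N : ℤ) = -1 := by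
  rw [vN, zpow_natCast, ← Complex.exp_nat_mul, mul_div_cancel₀ _ (by exact_mod_cast hN.ne'),
    Complex.exp_pi_mul_I]

theorem tendsto_quotient_eq_t_pow_mul_D_general (N : ℕ) (hN : 0 < N) (m : ℤ) (j l : ℕ) :
    Filter.Tendsto
      (fun w : ℂ =>
        (tw N (j : ℤ) w ^ m * qw ((N : ℤ) + j) w *
            (∏ k ∈ Finset.Icc 1 l, Aw ((N : ℤ) + j) (k : ℤ) w) +
          tw N (-(j : ℤ)) w ^ m * qw ((N : ℤ) - j) w *
            ∏ k ∈ Finset.Icc 1 l, Aw ((N : ℤ) - j) (k : ℤ) w) / qw (N : ℤ) w)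
      (nhdsWithin (Complex.exp (Real.pi * Complex.I / (4 * N)))
        {Complex.exp (Real.pi * Complex.I / (4 * N))}ᶜ)
      (nhds (tw N (j : ℤ) (Complex.exp (Real.pi * Complex.I / (4 * N))) ^ m *
        DD N m (j : ℤ) l)) := by
  set ω := Complex.exp (Real.pi * Complex.I / (4 * N))
  have hω : ω ≠ 0 := Complex.exp_ne_zero _
  have hv : vw ω = vN N := vw_exp_pi_mul_I_div N
  have h : vw ω ^ (N : ℤ) = -1 := hv ▸ vN_zpow_self hN
  have h8 : -(8 * (N : ℂ) / ω) ≠ 0 := by simp [hω, hN.ne']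
  have hden : HasDerivAt (brw N) (-(8 * N / ω)) ω :=
    (hasDerivAt_brw N hω).congr_deriv (by rw [cw_eq_neg_two hω h]; push_cast; ring)
  have hlim := tendsto_div_nhdsNE_of_hasDerivAt (hasDerivAt_numw hω h m j l) hden
    (numw_eq_zero hω h m j l) (brw_eq_zero hω h) h8
  rw [mul_div_cancel_left₀ _ h8, ← DD_eq_Dw hv] at hlim
  exact hlim.congr' (numw_div_brw_eventuallyEq ω N m j l)

/-- With `ω = exp(πi/(4N))`, the limit as `w → ω` of
`(t_j(w)^m [N+j](w) ∏A(N+j,k)(w) + t_{-j}(w)^m [N-j](w) ∏A(N-j,k)(w)) / [N](w)`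
equals `t_j(ω)^m · D_m(j,l)`, where `D_m` is evaluated at `v = exp(πi/N)`. -/
theorem tendsto_quotient_eq_t_pow_mul_D (N : ℕ) (hN : 0 < N) (m : ℤ) (j l : ℕ)
    (hj1 : 1 ≤ j) (hj2 : j ≤ N - 1) (hl : l ≤ N - 1) :
    Filter.Tendsto
      (fun w : ℂ =>
        (tw N (j : ℤ) w ^ m * qw ((N : ℤ) + j) w *
            (∏ k ∈ Finset.Icc 1 l, Aw ((N : ℤ) + j) (k : ℤ) w) +
          tw N (-(j : ℤ)) w ^ m * qw ((N : ℤ) - j) w *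
            ∏ k ∈ Finset.Icc 1 l, Aw ((N : ℤ) - j) (k : ℤ) w) / qw (N : ℤ) w)
      (nhdsWithin (Complex.exp (Real.pi * Complex.I / (4 * N)))
        {Complex.exp (Real.pi * Complex.I / (4 * N))}ᶜ)
      (nhds (tw N (j : ℤ) (Complex.exp (Real.pi * Complex.I / (4 * N))) ^ m *
        DD N m (j : ℤ) l)) :=
  tendsto_quotient_eq_t_pow_mul_D_general N hN m j l
end
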